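/- arXiv:1107.4943 — 2 statements merged into one kernel-verified Lean document; each statement's English description precedes it below -/
import Mathlib

section
/- Let (S_n^{(1)}, S_n^{(2)}) be a bivariate random walk (i.i.d. ℝ²-valued increments) such that (S_1^{(1)}, S_1^{(2)}) has the same distribution as (S_1^{(1)}, −S_1^{(2)}). Then for every n ≥ 1 and every Borel set B ⊆ ℝ: P(S_n^{(1)} ∈ B, min_{1≤i≤n} S_i^{(2)} > 0) ≤ P(S_n^{(1)} ∈ B) · P(min_{1≤i≤n} S_i^{(2)} ≥ 0). -/
/-!
The law `ν` of `n` i.i.d. increments is invariant under permuting them and under flipping the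
signs of the second coordinates of any of them, and these signed permutations fix `Sₙ¹`.
Averaging over all `2ⁿ n!` of them,
`P(Sₙ¹ ∈ B, Sᵢ² > 0 ∀ i) = E[1_B(Sₙ¹) N₊(X²)] / (2ⁿ n!)` and
`P(Sᵢ² ≥ 0 ∀ i) = E[N₀(X²)] / (2ⁿ n!)`, where `N₊(a)` (resp. `N₀(a)`) counts the signed
arrangements of `a ∈ ℝⁿ` whose prefix sums are all positive (resp. nonnegative). Everything
then follows from Sparre Andersen's combinatorial lemma in the form `N₊(a) ≤ C ≤ N₀(b)`.

For `a` generic (no nonempty signed subsum vanishes) `N₀(a) = N₊(a)`, and cutting every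
arrangement at the first minimum of its prefix sums gives
`2ⁿ n! = ∑_{S ⊆ I} N₊(a_S) N₊(a_{I \ S})` (reversing and negating the piece before the cut);
by induction on `|I|` this determines `N₊(a)`, so `N₊` takes a single value `C` on generic
vectors. A small generic perturbation of an arbitrary vector keeps strict signs of the signed
subsums and may only make vanishing ones nonzero, whence `N₊(a) ≤ C ≤ N₀(a)`.
-/

open MeasureTheory ProbabilityTheory Filter Real Topology
open scoped ENNReal

/-- The bivariate random walk built from i.i.d. `ℝ²`-valued increments. -/
noncomputable def walk2 {Ω : Type*} (X : ℕ → Ω → ℝ × ℝ) (n : ℕ) (ω : Ω) : ℝ × ℝ :=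
  ∑ i ∈ Finset.range n, X i ω

/-- `X` is an i.i.d. sequence of `ℝ²`-valued random vectors. -/
def IsIIDSeq2 {Ω : Type*} [MeasureSpace Ω] (X : ℕ → Ω → ℝ × ℝ) : Prop :=
  (∀ i, Measurable (X i)) ∧ iIndepFun X ℙ ∧
    ∀ i, IdentDistrib (X i) (X 0) ℙ ℙ

open Finset

def PosPrefixSums (L : List ℝ) : Prop := ∀ p, p <+: L → p ≠ [] → 0 < p.sum

def NonnegPrefixSums (L : List ℝ) : Prop := ∀ p, p <+: L → 0 ≤ p.sum

def NegSuffixSums (L : List ℝ) : Prop := ∀ s, s <:+ L → s ≠ [] → s.sum < 0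

theorem posPrefixSums_nil : PosPrefixSums [] :=
  fun _ hp hne => absurd (List.eq_nil_of_prefix_nil hp) hne

theorem negSuffixSums_iff_posPrefixSums (L : List ℝ) :
    NegSuffixSums L ↔ PosPrefixSums (L.reverse.map Neg.neg) := by
  constructor
  · intro h p hp hne
    obtain ⟨q, hq, rfl⟩ := List.prefix_map_iff.1 hp
    have hs : q.reverse <:+ L := List.reverse_prefix.1 (by rwa [List.reverse_reverse])
    simpa [← List.sum_neg] using h _ hs (by simpa using hne)
  · intro h s hs hne
    simpa [← List.sum_neg] using h _ ((List.reverse_prefix.2 hs).map _) (by simpa using hne)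

theorem NegSuffixSums.sum_nonpos {P s : List ℝ} (hP : NegSuffixSums P) (hs : s <:+ P) :
    s.sum ≤ 0 := by
  rcases eq_or_ne s [] with rfl | hne
  · simp
  · exact (hP s hs hne).le

theorem exists_eq_append_negSuffixSums_nonnegPrefixSums (L : List ℝ) :
    ∃ P Q, L = P ++ Q ∧ NegSuffixSums P ∧ NonnegPrefixSums Q := by
  induction L with
  | nil => exact ⟨[], [], rfl, fun s hs hne => absurd (List.eq_nil_of_suffix_nil hs) hne,
      fun _ hp => by simp [List.eq_nil_of_prefix_nil hp]⟩
  | cons x L ih =>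
    obtain ⟨P, Q, rfl, hP, hQ⟩ := ih
    by_cases hx : x + P.sum < 0
    · refine ⟨x :: P, Q, rfl, fun s hs hne => ?_, hQ⟩
      rcases List.suffix_cons_iff.1 hs with rfl | hs
      · simpa using hx
      · exact hP s hs hne
    · refine ⟨[], x :: (P ++ Q), rfl, fun s hs hne => absurd (List.eq_nil_of_suffix_nil hs) hne,
        fun p ⟨t, ht⟩ => ?_⟩
      rcases p with _ | ⟨y, p⟩
      · simp
      simp only [List.cons_append, List.cons.injEq] at ht
      obtain ⟨rfl, ht⟩ := ht
      simp only [not_lt, List.sum_cons] at hx ⊢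
      rcases List.append_eq_append_iff.1 ht with ⟨r, rfl, -⟩ | ⟨r, rfl, hr⟩
      · have := hP.sum_nonpos (List.suffix_append p r)
        simp only [List.sum_append] at hx
        linarith
      · have := hQ r ⟨t, hr.symm⟩
        simp only [List.sum_append]
        linarith

theorem NegSuffixSums.eq_of_append_eq_append {P Q P' Q' : List ℝ} (hP : NegSuffixSums P)
    (hQ : NonnegPrefixSums Q) (hP' : NegSuffixSums P') (hQ' : NonnegPrefixSums Q')
    (h : P ++ Q = P' ++ Q') : P = P' := by
  rcases List.append_eq_append_iff.1 h with ⟨r, rfl, hr⟩ | ⟨r, rfl, hr⟩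
  all_goals
    rcases eq_or_ne r [] with rfl | hne
    · simp
    exfalso
  · exact (hP' r (List.suffix_append P r) hne).not_ge (hQ r ⟨Q', hr.symm⟩)
  · exact (hP r (List.suffix_append P' r) hne).not_ge (hQ' r ⟨Q, hr.symm⟩)

theorem posPrefixSums_iff_take (L : List ℝ) :
    PosPrefixSums L ↔ ∀ k ∈ Icc 1 L.length, 0 < (L.take k).sum := by
  refine ⟨fun h k hk => h _ (List.take_prefix k L) ?_, fun h p hp hne => ?_⟩
  · obtain ⟨hk1, hkL⟩ := mem_Icc.1 hk
    simp only [ne_eq, List.take_eq_nil_iff, not_or]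
    exact ⟨by omega, List.ne_nil_of_length_pos (by omega)⟩
  · rw [List.prefix_iff_eq_take.1 hp]
    exact h _ (mem_Icc.2 ⟨List.length_pos_iff.2 hne, hp.length_le⟩)

theorem nonnegPrefixSums_iff_take (L : List ℝ) :
    NonnegPrefixSums L ↔ ∀ k ∈ Icc 1 L.length, 0 ≤ (L.take k).sum := by
  refine ⟨fun h k _ => h _ (List.take_prefix k L), fun h p hp => ?_⟩
  rcases eq_or_ne p [] with rfl | hne
  · simp
  · rw [List.prefix_iff_eq_take.1 hp]
    exact h _ (mem_Icc.2 ⟨List.length_pos_iff.2 hne, hp.length_le⟩)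

noncomputable section SignedArrangements

variable {ι : Type*} [DecidableEq ι]

def signed (a : ι → ℝ) (T : Finset ι) (i : ι) : ℝ := if i ∈ T then -a i else a i

theorem abs_signed (a : ι → ℝ) (T : Finset ι) (i : ι) : |signed a T i| = |a i| := by
  by_cases h : i ∈ T <;> simp [signed, h]

/-- A signed arrangement of `I` is a pair `(l, T)`: a listing `l` of `I` and the set `T ⊆ I` of
entries whose sign is flipped. -/
def signedArrangements (I : Finset ι) : Finset (List ι × Finset ι) :=
  I.toList.permutations.toFinset ×ˢ I.powerset

def signedValues (a : ι → ℝ) (w : List ι × Finset ι) : List ℝ := w.1.map (signed a w.2)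

open Classical in
def arrangementCount (P : List ℝ → Prop) (a : ι → ℝ) (I : Finset ι) : ℕ :=
  #{w ∈ signedArrangements I | P (signedValues a w)}

def joinArrangements (w₁ w₂ : List ι × Finset ι) : List ι × Finset ι :=
  (w₁.1 ++ w₂.1, w₁.2 ∪ w₂.2)

variable {I S : Finset ι} {l : List ι} {T : Finset ι}

theorem mem_signedArrangements :
    (l, T) ∈ signedArrangements I ↔ (l.Nodup ∧ l.toFinset = I) ∧ T ⊆ I := by
  simp only [signedArrangements, mem_product, List.mem_toFinset, List.mem_permutations,
    mem_powerset]
  refine and_congr_left' ⟨fun h => ⟨h.nodup_iff.2 I.nodup_toList, ?_⟩, fun ⟨hl, hI⟩ => ?_⟩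
  · rw [List.toFinset_eq_of_perm _ _ h, toList_toFinset]
  · exact (List.perm_ext_iff_of_nodup hl I.nodup_toList).2 fun i => by
      rw [mem_toList, ← hI, List.mem_toFinset]

theorem mem_of_mem_signedArrangements (hw : (l, T) ∈ signedArrangements I) {i : ι}
    (hi : i ∈ l) : i ∈ I := by
  rw [← (mem_signedArrangements.1 hw).1.2, List.mem_toFinset]
  exact hi

theorem toFinset_subset_of_prefix (hw : (l, T) ∈ signedArrangements I) {q : List ι}
    (hq : q <+: l) : q.toFinset ⊆ I :=
  fun _ hi => mem_of_mem_signedArrangements hw (hq.subset (List.mem_toFinset.1 hi))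

theorem signedArrangements_nonempty (I : Finset ι) : (signedArrangements I).Nonempty :=
  ⟨(I.toList, ∅), mem_signedArrangements.2 ⟨⟨nodup_toList I, toList_toFinset I⟩, empty_subset I⟩⟩

theorem signedValues_congr (a : ι → ℝ) {T' : Finset ι} (h : ∀ i ∈ l, i ∈ T ↔ i ∈ T') :
    signedValues a (l, T) = signedValues a (l, T') :=
  List.map_congr_left fun i hi => by simp only [signed, h i hi]

theorem signedValues_reverse (a : ι → ℝ) (hw : (l, T) ∈ signedArrangements I) :
    signedValues a (l.reverse, I \ T) = (signedValues a (l, T)).reverse.map Neg.neg := by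
  simp only [signedValues, List.map_reverse, List.map_map]
  congr 1
  refine List.map_congr_left fun i hi => ?_
  by_cases hT : i ∈ T <;> simp [signed, hT, mem_of_mem_signedArrangements hw hi]

theorem arrangementCount_empty {P : List ℝ → Prop} (hP : P []) (a : ι → ℝ) :
    arrangementCount P a ∅ = 1 := by
  classical
  simp only [arrangementCount, signedArrangements, toList_empty, List.permutations_nil,
    List.toFinset_cons, List.toFinset_nil, insert_empty_eq, powerset_empty,
    singleton_product_singleton]
  rw [filter_singleton, if_pos (by simpa [signedValues] using hP), card_singleton]

theorem arrangementCount_mono {P Q : List ℝ → Prop} {a b : ι → ℝ}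
    (h : ∀ w ∈ signedArrangements I, P (signedValues a w) → Q (signedValues b w)) :
    arrangementCount P a I ≤ arrangementCount Q b I := by
  classical
  exact card_le_card fun w hw =>
    mem_filter.2 ⟨(mem_filter.1 hw).1, h w (mem_filter.1 hw).1 (mem_filter.1 hw).2⟩

/-- Reversing an arrangement and flipping all its signs. -/
theorem arrangementCount_negSuffixSums (a : ι → ℝ) (I : Finset ι) :
    arrangementCount NegSuffixSums a I = arrangementCount PosPrefixSums a I := by
  classical
  have hrev : ∀ {w}, w ∈ signedArrangements I → (w.1.reverse, I \ w.2) ∈ signedArrangements I :=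
    fun {w} hw => by
      obtain ⟨⟨hl, hI⟩, -⟩ := mem_signedArrangements.1 hw
      exact mem_signedArrangements.2 ⟨⟨List.nodup_reverse.2 hl, by rwa [List.toFinset_reverse]⟩,
        sdiff_subset⟩
  refine card_nbij' (fun w => (w.1.reverse, I \ w.2)) (fun w => (w.1.reverse, I \ w.2))
    (fun w hw => ?_) (fun w hw => ?_) (fun w hw => ?_) (fun w hw => ?_)
  · simp only [coe_filter] at hw ⊢
    refine ⟨hrev hw.1, ?_⟩
    rw [signedValues_reverse a hw.1]
    exact (negSuffixSums_iff_posPrefixSums _).1 hw.2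
  · simp only [coe_filter] at hw ⊢
    refine ⟨hrev hw.1, ?_⟩
    rw [negSuffixSums_iff_posPrefixSums, signedValues_reverse a hw.1]
    simpa [List.map_reverse, Function.comp_def] using hw.2
  all_goals
    obtain ⟨-, hT⟩ := mem_signedArrangements.1 (mem_filter.1 hw).1
    simp only [List.reverse_reverse, Finset.sdiff_sdiff_eq_self hT]

section Join

variable {w₁ w₂ : List ι × Finset ι}

theorem joinArrangements_mem (hS : S ⊆ I) (h₁ : w₁ ∈ signedArrangements S)
    (h₂ : w₂ ∈ signedArrangements (I \ S)) : joinArrangements w₁ w₂ ∈ signedArrangements I := by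
  obtain ⟨⟨hl₁, hl₁S⟩, hT₁⟩ := mem_signedArrangements.1 h₁
  obtain ⟨⟨hl₂, hl₂I⟩, hT₂⟩ := mem_signedArrangements.1 h₂
  refine mem_signedArrangements.2 ⟨⟨?_, ?_⟩, ?_⟩
  · refine hl₁.append hl₂ (List.disjoint_toFinset_iff_disjoint.1 ?_)
    rw [hl₁S, hl₂I]
    exact disjoint_sdiff
  · rw [List.toFinset_append, hl₁S, hl₂I, union_sdiff_of_subset hS]
  · exact union_subset (hT₁.trans hS) (hT₂.trans sdiff_subset)

theorem signedValues_joinArrangements (a : ι → ℝ) (h₁ : w₁ ∈ signedArrangements S)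
    (h₂ : w₂ ∈ signedArrangements (I \ S)) :
    signedValues a (joinArrangements w₁ w₂) = signedValues a w₁ ++ signedValues a w₂ := by
  obtain ⟨l₁, T₁⟩ := w₁
  obtain ⟨l₂, T₂⟩ := w₂
  have hT₁ := (mem_signedArrangements.1 h₁).2
  have hT₂ := (mem_signedArrangements.1 h₂).2
  simp only [joinArrangements, signedValues, List.map_append]
  congr 1 <;> refine List.map_congr_left fun i hi => ?_
  · have hS := mem_of_mem_signedArrangements h₁ hi
    have : i ∉ T₂ := fun h => (mem_sdiff.1 (hT₂ h)).2 hS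
    simp [signed, this]
  · have hS := mem_sdiff.1 (mem_of_mem_signedArrangements h₂ hi)
    have : i ∉ T₁ := fun h => hS.2 (hT₁ h)
    simp [signed, this]

theorem union_inter_eq_and_union_sdiff_eq {T₁ T₂ : Finset ι} (h₁ : T₁ ⊆ S)
    (h₂ : T₂ ⊆ I \ S) : (T₁ ∪ T₂) ∩ S = T₁ ∧ (T₁ ∪ T₂) \ S = T₂ := by
  have hd : Disjoint T₂ S := disjoint_of_subset_left h₂ sdiff_disjoint
  exact ⟨by rw [union_inter_distrib_right, inter_eq_left.2 h₁, disjoint_iff_inter_eq_empty.1 hd,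
      union_empty],
    by rw [union_sdiff_distrib, sdiff_eq_empty_iff_subset.2 h₁, empty_union, hd.sdiff_eq_left]⟩

theorem eq_of_joinArrangements_eq (a : ι → ℝ) {S' : Finset ι} {w₁' w₂' : List ι × Finset ι}
    (h₁ : w₁ ∈ signedArrangements S) (h₂ : w₂ ∈ signedArrangements (I \ S))
    (h₁' : w₁' ∈ signedArrangements S') (h₂' : w₂' ∈ signedArrangements (I \ S'))
    (hP : NegSuffixSums (signedValues a w₁)) (hQ : NonnegPrefixSums (signedValues a w₂))
    (hP' : NegSuffixSums (signedValues a w₁')) (hQ' : NonnegPrefixSums (signedValues a w₂'))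
    (h : joinArrangements w₁ w₂ = joinArrangements w₁' w₂') :
    S = S' ∧ w₁ = w₁' ∧ w₂ = w₂' := by
  have hsv := signedValues_joinArrangements a h₁ h₂
  rw [h, signedValues_joinArrangements a h₁' h₂'] at hsv
  have hlen := congrArg List.length (hP.eq_of_append_eq_append hQ hP' hQ' hsv.symm)
  obtain ⟨l₁, T₁⟩ := w₁
  obtain ⟨l₂, T₂⟩ := w₂
  obtain ⟨l₁', T₁'⟩ := w₁'
  obtain ⟨l₂', T₂'⟩ := w₂'
  simp only [joinArrangements, Prod.mk.injEq] at h
  simp only [signedValues, List.length_map] at hlen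
  obtain ⟨rfl, rfl⟩ := List.append_inj h.1 hlen
  obtain ⟨⟨-, rfl⟩, hT₁⟩ := mem_signedArrangements.1 h₁
  obtain ⟨⟨-, rfl⟩, hT₁'⟩ := mem_signedArrangements.1 h₁'
  have e := union_inter_eq_and_union_sdiff_eq hT₁ (mem_signedArrangements.1 h₂).2
  have e' := union_inter_eq_and_union_sdiff_eq hT₁' (mem_signedArrangements.1 h₂').2
  rw [h.2] at e
  exact ⟨rfl, by rw [← e.1, e'.1], by rw [← e.2, e'.2]⟩

theorem exists_joinArrangements_eq (a : ι → ℝ) (hw : (l, T) ∈ signedArrangements I) :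
    ∃ S ⊆ I, ∃ w₁ ∈ signedArrangements S, ∃ w₂ ∈ signedArrangements (I \ S),
      NegSuffixSums (signedValues a w₁) ∧ NonnegPrefixSums (signedValues a w₂) ∧
        joinArrangements w₁ w₂ = (l, T) := by
  obtain ⟨⟨hl, hlI⟩, hTI⟩ := mem_signedArrangements.1 hw
  obtain ⟨P, Q, hPQ, hP, hQ⟩ :=
    exists_eq_append_negSuffixSums_nonnegPrefixSums (signedValues a (l, T))
  set k := P.length
  set S := (l.take k).toFinset
  have hsplit : l.take k ++ l.drop k = l := List.take_append_drop _ _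
  have hdisj : Disjoint S (l.drop k).toFinset := List.disjoint_toFinset_iff_disjoint.2
    (List.disjoint_of_nodup_append (by rw [hsplit]; exact hl))
  have hI : I = S ∪ (l.drop k).toFinset := by rw [← List.toFinset_append, hsplit, hlI]
  have hP' : signedValues a (l.take k, T ∩ S) = P := by
    rw [signedValues_congr a (T' := T) fun i hi => by simp [S, List.mem_toFinset.2 hi],
      signedValues, List.map_take]
    exact (congrArg (List.take k) hPQ).trans (List.take_left' rfl)
  have hQ' : signedValues a (l.drop k, T \ S) = Q := by
    rw [signedValues_congr a (T' := T) fun i hi => ?_, signedValues, List.map_drop]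
    · exact (congrArg (List.drop k) hPQ).trans (List.drop_left' rfl)
    · have : i ∉ S := fun h => List.disjoint_toFinset_iff_disjoint.1 hdisj
        (List.mem_toFinset.1 h) hi
      simp [this]
  refine ⟨S, hI ▸ subset_union_left, _, mem_signedArrangements.2
    ⟨⟨hl.sublist (List.take_sublist _ _), rfl⟩, inter_subset_right⟩, _,
    mem_signedArrangements.2 ⟨⟨hl.sublist (List.drop_sublist _ _), ?_⟩,
      sdiff_subset_sdiff hTI le_rfl⟩, hP' ▸ hP, hQ' ▸ hQ, ?_⟩
  · rw [hI, union_sdiff_cancel_left hdisj]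
  · simp only [joinArrangements, hsplit, Prod.mk.injEq, true_and]
    rw [union_comm]
    exact sdiff_union_inter T S

end Join

/-- Every signed arrangement is cut uniquely at the first minimum of its prefix sums. -/
theorem card_signedArrangements_eq_sum (a : ι → ℝ) (I : Finset ι) :
    #(signedArrangements I) = ∑ S ∈ I.powerset,
      arrangementCount NegSuffixSums a S * arrangementCount NonnegPrefixSums a (I \ S) := by
  classical
  simp only [arrangementCount, ← card_product]
  rw [← card_sigma]
  symm
  refine card_bij (fun x _ => joinArrangements x.2.1 x.2.2) ?_ ?_ ?_
  · rintro ⟨S, w₁, w₂⟩ hx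
    simp only [mem_sigma, mem_powerset, mem_product, mem_filter] at hx
    exact joinArrangements_mem hx.1 hx.2.1.1 hx.2.2.1
  · rintro ⟨S, w₁, w₂⟩ hx ⟨S', w₁', w₂'⟩ hx' h
    simp only [mem_sigma, mem_powerset, mem_product, mem_filter] at hx hx'
    obtain ⟨rfl, rfl, rfl⟩ := eq_of_joinArrangements_eq a hx.2.1.1 hx.2.2.1 hx'.2.1.1
      hx'.2.2.1 hx.2.1.2 hx.2.2.2 hx'.2.1.2 hx'.2.2.2 h
    rfl
  · rintro ⟨l, T⟩ hw
    obtain ⟨S, hS, w₁, h₁, w₂, h₂, hP, hQ, h⟩ := exists_joinArrangements_eq a hw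
    exact ⟨⟨S, w₁, w₂⟩, by simp [hS, h₁, h₂, hP, hQ], h⟩

end SignedArrangements

noncomputable section Generic

variable {ι : Type*} [DecidableEq ι] {I : Finset ι}

def IsGeneric (a : ι → ℝ) (I : Finset ι) : Prop :=
  ∀ J ⊆ I, J.Nonempty → ∀ T : Finset ι, ∑ i ∈ J, signed a T i ≠ 0

theorem IsGeneric.mono {a : ι → ℝ} {S : Finset ι} (h : IsGeneric a I) (hS : S ⊆ I) :
    IsGeneric a S :=
  fun J hJ => h J (hJ.trans hS)

theorem sum_signed_inter {J : Finset ι} (hJ : J ⊆ I) (a : ι → ℝ) (T : Finset ι) :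
    ∑ i ∈ J, signed a (T ∩ I) i = ∑ i ∈ J, signed a T i :=
  sum_congr rfl fun i hi => by simp [signed, hJ hi]

theorem exists_isGeneric (I : Finset ι) : ∃ g : ι → ℝ, IsGeneric g I := by
  induction I using Finset.induction_on with
  | empty => exact ⟨0, fun J hJ hne => absurd (subset_empty.1 hJ ▸ hne) Finset.not_nonempty_empty⟩
  | insert x I hx ih =>
    obtain ⟨g, hg⟩ := ih
    set g' := Function.update g x (1 + ∑ i ∈ I, |g i|)
    have hg' : ∀ i ∈ I, g' i = g i :=
      fun i hi => Function.update_of_ne (ne_of_mem_of_not_mem hi hx) _ _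
    refine ⟨g', fun J hJ hne T => ?_⟩
    have hJI : ∀ i ∈ J, i ≠ x → i ∈ I := fun i hi hix => (mem_insert.1 (hJ hi)).resolve_left hix
    by_cases hxJ : x ∈ J
    · -- the new entry outweighs all the others together
      have hrest : |∑ i ∈ J.erase x, signed g' T i| ≤ ∑ i ∈ I, |g i| :=
        calc |∑ i ∈ J.erase x, signed g' T i| ≤ ∑ i ∈ J.erase x, |g i| := by
              refine (abs_sum_le_sum_abs _ _).trans_eq (sum_congr rfl fun i hi => ?_)
              rw [abs_signed, hg' i (hJI i (mem_of_mem_erase hi) (ne_of_mem_erase hi))]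
          _ ≤ ∑ i ∈ I, |g i| := sum_le_sum_of_subset_of_nonneg
              (fun i hi => hJI i (mem_of_mem_erase hi) (ne_of_mem_erase hi))
              fun i _ _ => abs_nonneg _
      have hx' : |signed g' T x| = 1 + ∑ i ∈ I, |g i| := by
        rw [abs_signed]
        simp only [g', Function.update_self]
        exact abs_of_pos (by positivity)
      rw [← add_sum_erase J _ hxJ]
      intro h
      have : |signed g' T x| = |∑ i ∈ J.erase x, signed g' T i| := by
        rw [eq_neg_of_add_eq_zero_left h, abs_neg]
      linarith
    · have hJI' : J ⊆ I := fun i hi => hJI i hi fun h => hxJ (h ▸ hi)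
      rw [sum_congr rfl fun i hi => show signed g' T i = signed g T i by
        simp only [signed, hg' i (hJI' hi)]]
      exact hg J hJI' hne T

theorem eventually_sign_add_mul (c d : ℝ) : ∀ᶠ t in 𝓝[>] 0,
    (d ≠ 0 → c + t * d ≠ 0) ∧ (0 < c → 0 < c + t * d) ∧ (c < 0 → c + t * d < 0) := by
  have hf : Tendsto (fun t => c + t * d) (𝓝[>] 0) (𝓝 c) := by
    have : Tendsto (fun t : ℝ => c + t * d) (𝓝 0) (𝓝 (c + 0 * d)) :=
      (continuous_const.add (continuous_id.mul continuous_const)).tendsto 0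
    simpa using this.mono_left nhdsWithin_le_nhds
  rcases lt_trichotomy c 0 with hc | rfl | hc
  · filter_upwards [hf.eventually_lt_const hc] with t ht
    exact ⟨fun _ => ht.ne, fun h => absurd h hc.not_gt, fun _ => ht⟩
  · filter_upwards [self_mem_nhdsWithin] with t (ht : 0 < t)
    simp only [zero_add, lt_irrefl, false_imp_iff, and_true]
    exact mul_ne_zero ht.ne'
  · filter_upwards [hf.eventually_const_lt hc] with t ht
    exact ⟨fun _ => ht.ne', fun _ => ht, fun h => absurd h hc.not_gt⟩

theorem exists_isGeneric_perturbation {g : ι → ℝ} (hg : IsGeneric g I) (a : ι → ℝ) :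
    ∃ a', IsGeneric a' I ∧ ∀ J ⊆ I, ∀ T : Finset ι,
      (0 < ∑ i ∈ J, signed a T i → 0 < ∑ i ∈ J, signed a' T i) ∧
      (0 < ∑ i ∈ J, signed a' T i → 0 ≤ ∑ i ∈ J, signed a T i) := by
  have hlin : ∀ (t : ℝ) (J T : Finset ι), ∑ i ∈ J, signed (a + t • g) T i =
      ∑ i ∈ J, signed a T i + t * ∑ i ∈ J, signed g T i := by
    intro t J T
    rw [mul_sum, ← sum_add_distrib]
    refine sum_congr rfl fun i _ => ?_
    simp only [signed, Pi.add_apply, Pi.smul_apply, smul_eq_mul]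
    split_ifs <;> ring
  obtain ⟨t, ht⟩ := ((eventually_all_finset I.powerset).2 fun J _ =>
    (eventually_all_finset I.powerset).2 fun T _ => eventually_sign_add_mul
      (∑ i ∈ J, signed a T i) (∑ i ∈ J, signed g T i)).exists
  -- only the signs in `I` matter, so it suffices to control `T ⊆ I`
  have ht' : ∀ J ⊆ I, ∀ T : Finset ι,
      (∑ i ∈ J, signed g T i ≠ 0 → ∑ i ∈ J, signed (a + t • g) T i ≠ 0) ∧
      (0 < ∑ i ∈ J, signed a T i → 0 < ∑ i ∈ J, signed (a + t • g) T i) ∧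
      (∑ i ∈ J, signed a T i < 0 → ∑ i ∈ J, signed (a + t • g) T i < 0) := fun J hJ T => by
    simpa only [← hlin, sum_signed_inter hJ] using
      ht J (mem_powerset.2 hJ) (T ∩ I) (mem_powerset.2 inter_subset_right)
  refine ⟨a + t • g, fun J hJ hne T => (ht' J hJ T).1 (hg J hJ hne T), fun J hJ T => ?_⟩
  obtain ⟨-, hpos, hneg⟩ := ht' J hJ T
  exact ⟨hpos, fun h => not_lt.1 fun h' => (hneg h').not_gt h⟩

theorem posPrefixSums_signedValues_iff (a : ι → ℝ) {l : List ι} (hl : l.Nodup) (T : Finset ι) :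
    PosPrefixSums (signedValues a (l, T)) ↔
      ∀ q, q <+: l → q ≠ [] → 0 < ∑ i ∈ q.toFinset, signed a T i := by
  refine ⟨fun h q hq hne => ?_, fun h p hp hne => ?_⟩
  · rw [List.sum_toFinset _ (hl.sublist hq.sublist)]
    exact h _ (hq.map _) (by simpa using hne)
  · obtain ⟨q, hq, rfl⟩ := List.prefix_map_iff.1 hp
    rw [← List.sum_toFinset _ (hl.sublist hq.sublist)]
    exact h q hq (by simpa using hne)

theorem nonnegPrefixSums_signedValues_iff (a : ι → ℝ) {l : List ι} (hl : l.Nodup)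
    (T : Finset ι) : NonnegPrefixSums (signedValues a (l, T)) ↔
      ∀ q, q <+: l → 0 ≤ ∑ i ∈ q.toFinset, signed a T i := by
  refine ⟨fun h q hq => ?_, fun h p hp => ?_⟩
  · rw [List.sum_toFinset _ (hl.sublist hq.sublist)]
    exact h _ (hq.map _)
  · obtain ⟨q, hq, rfl⟩ := List.prefix_map_iff.1 hp
    rw [← List.sum_toFinset _ (hl.sublist hq.sublist)]
    exact h q hq

theorem IsGeneric.arrangementCount_nonnegPrefixSums {a : ι → ℝ} (h : IsGeneric a I) :
    arrangementCount NonnegPrefixSums a I = arrangementCount PosPrefixSums a I := by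
  classical
  refine congrArg card (filter_congr fun ⟨l, T⟩ hw => ?_)
  have hl := (mem_signedArrangements.1 hw).1.1
  rw [nonnegPrefixSums_signedValues_iff a hl, posPrefixSums_signedValues_iff a hl]
  refine forall₂_congr fun q hq => ⟨fun hq0 hne => hq0.lt_of_ne ?_, fun hpos => ?_⟩
  · exact (h _ (toFinset_subset_of_prefix hw hq) (List.toFinset_nonempty_iff _ |>.2 hne) T).symm
  · rcases eq_or_ne q [] with rfl | hne
    · simp
    · exact (hpos hne).le

theorem exists_isGeneric_arrangementCount_le {g : ι → ℝ} (hg : IsGeneric g I) (a : ι → ℝ) :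
    ∃ a', IsGeneric a' I ∧
      arrangementCount PosPrefixSums a I ≤ arrangementCount PosPrefixSums a' I ∧
      arrangementCount PosPrefixSums a' I ≤ arrangementCount NonnegPrefixSums a I := by
  obtain ⟨a', ha', hsign⟩ := exists_isGeneric_perturbation hg a
  refine ⟨a', ha', arrangementCount_mono fun ⟨l, T⟩ hw => ?_,
    arrangementCount_mono fun ⟨l, T⟩ hw => ?_⟩
  all_goals
    have hl := (mem_signedArrangements.1 hw).1.1
    simp only [posPrefixSums_signedValues_iff _ hl, nonnegPrefixSums_signedValues_iff _ hl]
  · exact fun h q hq hne => (hsign _ (toFinset_subset_of_prefix hw hq) T).1 (h q hq hne)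
  · intro h q hq
    rcases eq_or_ne q [] with rfl | hne
    · simp
    · exact (hsign _ (toFinset_subset_of_prefix hw hq) T).2 (h q hq hne)

theorem IsGeneric.arrangementCount_eq {a b : ι → ℝ} (ha : IsGeneric a I) (hb : IsGeneric b I) :
    arrangementCount PosPrefixSums a I = arrangementCount PosPrefixSums b I := by
  induction I using Finset.strongInduction with
  | H I ih =>
  rcases I.eq_empty_or_nonempty with rfl | hI
  · rw [arrangementCount_empty posPrefixSums_nil, arrangementCount_empty posPrefixSums_nil]
  have hsum : ∀ c, IsGeneric c I → #(signedArrangements I) = ∑ S ∈ I.powerset,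
      arrangementCount PosPrefixSums c S * arrangementCount PosPrefixSums c (I \ S) :=
    fun c hc => by
      rw [card_signedArrangements_eq_sum c]
      refine sum_congr rfl fun S _ => ?_
      rw [arrangementCount_negSuffixSums,
        (hc.mono sdiff_subset).arrangementCount_nonnegPrefixSums]
  have hmid : ∀ S ∈ (I.powerset.erase ∅).erase I,
      arrangementCount PosPrefixSums a S * arrangementCount PosPrefixSums a (I \ S) =
      arrangementCount PosPrefixSums b S * arrangementCount PosPrefixSums b (I \ S) := by
    intro S hS
    obtain ⟨hSI, hS0, hS⟩ : S ≠ I ∧ S ≠ ∅ ∧ S ⊆ I := by simpa using hS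
    rw [ih S (Finset.ssubset_iff_subset_ne.2 ⟨hS, hSI⟩) (ha.mono hS) (hb.mono hS),
      ih (I \ S) (sdiff_ssubset hS (nonempty_iff_ne_empty.2 hS0)) (ha.mono sdiff_subset)
        (hb.mono sdiff_subset)]
  have hmem : I ∈ I.powerset.erase ∅ := mem_erase.2 ⟨hI.ne_empty, mem_powerset_self I⟩
  have h := (hsum a ha).symm.trans (hsum b hb)
  rw [← add_sum_erase _ _ (empty_mem_powerset I), ← add_sum_erase _ _ hmem,
    ← add_sum_erase _ _ (empty_mem_powerset I), ← add_sum_erase _ _ hmem, sum_congr rfl hmid]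
    at h
  simp only [sdiff_empty, Finset.sdiff_self, arrangementCount_empty posPrefixSums_nil] at h
  omega

/-- `C` is the common count of all generic vectors. -/
theorem exists_arrangementCount_le_le (I : Finset ι) : ∃ C : ℕ, ∀ a : ι → ℝ,
    arrangementCount PosPrefixSums a I ≤ C ∧ C ≤ arrangementCount NonnegPrefixSums a I := by
  obtain ⟨g, hg⟩ := exists_isGeneric I
  refine ⟨arrangementCount PosPrefixSums g I, fun a => ?_⟩
  obtain ⟨a', ha', h₁, h₂⟩ := exists_isGeneric_arrangementCount_le hg a
  rw [← ha'.arrangementCount_eq hg]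
  exact ⟨h₁, h₂⟩

end Generic

open Classical in
theorem sum_measure_inter_eq_setLIntegral {α κ : Type*} [MeasurableSpace α] (ν : Measure α)
    (s : Finset κ) {E : κ → Set α} (hE : ∀ k ∈ s, MeasurableSet (E k)) (A : Set α) :
    ∑ k ∈ s, ν (A ∩ E k) = ∫⁻ x in A, (#{k ∈ s | x ∈ E k} : ℝ≥0∞) ∂ν :=
  calc ∑ k ∈ s, ν (A ∩ E k) = ∑ k ∈ s, ∫⁻ x in A, (E k).indicator 1 x ∂ν :=
        sum_congr rfl fun k hk => by
          rw [lintegral_indicator_one (hE k hk), Measure.restrict_apply (hE k hk), Set.inter_comm]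
    _ = ∫⁻ x in A, ∑ k ∈ s, (E k).indicator 1 x ∂ν :=
        (lintegral_finsetSum _ fun k hk => measurable_const.indicator (hE k hk)).symm
    _ = ∫⁻ x in A, (#{k ∈ s | x ∈ E k} : ℝ≥0∞) ∂ν := by
        congr 1
        ext x
        rw [card_filter, Nat.cast_sum]
        refine sum_congr rfl fun k _ => ?_
        by_cases h : x ∈ E k <;> simp [h]

theorem sum_take_ofFn_eq_sum_range {M : Type*} [AddCommMonoid M] (f : ℕ → M) {n k : ℕ}
    (hk : k ≤ n) : ((List.ofFn fun j : Fin n => f j).take k).sum = ∑ j ∈ range k, f j := by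
  rw [List.sum_take_ofFn, sum_filter, Fin.sum_univ_eq_sum_range (fun j => if j < k then f j else 0),
    ← sum_filter]
  congr 1
  ext j
  simp only [mem_filter, mem_range]
  omega

noncomputable section SignedPermutations

variable {n : ℕ}

theorem exists_perm_ofFn_eq {l : List (Fin n)} {T : Finset (Fin n)}
    (hw : (l, T) ∈ signedArrangements univ) : ∃ σ : Equiv.Perm (Fin n), List.ofFn σ = l := by
  obtain ⟨⟨hl, hlI⟩, -⟩ := mem_signedArrangements.1 hw
  have hmem : ∀ i, i ∈ l := fun i => List.mem_toFinset.1 (hlI ▸ mem_univ i)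
  have hlen : l.length = n := by
    simpa using (List.toFinset_card_of_nodup hl).symm.trans (congrArg card hlI)
  refine ⟨(finCongr hlen.symm).trans (hl.getEquivOfForallMemList l hmem), ?_⟩
  apply List.ext_getElem (by simp [hlen])
  intro i h₁ h₂
  simp [List.Nodup.getEquivOfForallMemList]

def signedPerm (σ : Equiv.Perm (Fin n)) (T : Finset (Fin n)) (v : Fin n → ℝ × ℝ) :
    Fin n → ℝ × ℝ :=
  fun j => if σ j ∈ T then ((v (σ j)).1, -(v (σ j)).2) else v (σ j)

theorem measurePreserving_signedPerm {μ : Measure (ℝ × ℝ)} [SigmaFinite μ]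
    (hμ : MeasurePreserving (fun p : ℝ × ℝ => (p.1, -p.2)) μ μ) (σ : Equiv.Perm (Fin n))
    (T : Finset (Fin n)) :
    MeasurePreserving (signedPerm σ T) (Measure.pi fun _ => μ) (Measure.pi fun _ => μ) := by
  have hflip : MeasurePreserving
      (fun v i => (if i ∈ T then fun p : ℝ × ℝ => (p.1, -p.2) else id) (v i))
      (Measure.pi fun _ : Fin n => μ) (Measure.pi fun _ => μ) :=
    measurePreserving_pi _ _ fun i => by
      split_ifs
      exacts [hμ, MeasurePreserving.id μ]
  have hperm := measurePreserving_arrowCongr' (fun _ => μ) (fun _ => μ) σ.symm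
    (MeasurableEquiv.refl (ℝ × ℝ)) fun _ => MeasurePreserving.id μ
  convert hperm.comp hflip using 1
  funext v j
  simp only [Function.comp_apply]
  simp [MeasurableEquiv.arrowCongr', Equiv.arrowCongr', signedPerm]
  split_ifs <;> rfl

theorem sum_fst_signedPerm (σ : Equiv.Perm (Fin n)) (T : Finset (Fin n)) (v : Fin n → ℝ × ℝ) :
    ∑ j, (signedPerm σ T v j).1 = ∑ j, (v j).1 := by
  simp only [signedPerm, apply_ite Prod.fst, ite_self]
  exact Equiv.sum_comp σ fun i => (v i).1

theorem ofFn_snd_signedPerm (σ : Equiv.Perm (Fin n)) (T : Finset (Fin n)) (v : Fin n → ℝ × ℝ) :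
    List.ofFn (fun j => (signedPerm σ T v j).2) =
      signedValues (fun i => (v i).2) (List.ofFn σ, T) := by
  simp only [signedValues, List.map_ofFn]
  congr 1
  ext j
  simp only [signedPerm, Function.comp_apply, signed]
  split_ifs <;> rfl

theorem measurableSet_posPrefixSums :
    MeasurableSet {v : Fin n → ℝ × ℝ | PosPrefixSums (List.ofFn fun j => (v j).2)} := by
  simp only [posPrefixSums_iff_take, List.length_ofFn, List.sum_take_ofFn]
  measurability

theorem measurableSet_nonnegPrefixSums :
    MeasurableSet {v : Fin n → ℝ × ℝ | NonnegPrefixSums (List.ofFn fun j => (v j).2)} := by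
  simp only [nonnegPrefixSums_iff_take, List.length_ofFn, List.sum_take_ofFn]
  measurability

theorem measurableSet_sum_fst_mem {B : Set ℝ} (hB : MeasurableSet B) :
    MeasurableSet {v : Fin n → ℝ × ℝ | ∑ j, (v j).1 ∈ B} :=
  (Finset.measurable_sum _ fun j _ => (measurable_pi_apply j).fst) hB

variable {μ : Measure (ℝ × ℝ)} [IsProbabilityMeasure μ]
  (hμ : MeasurePreserving (fun p : ℝ × ℝ => (p.1, -p.2)) μ μ)
include hμ

theorem card_mul_pi_measure_eq_setLIntegral {P : List ℝ → Prop}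
    (hP : MeasurableSet {v : Fin n → ℝ × ℝ | P (List.ofFn fun j => (v j).2)}) {B : Set ℝ}
    (hB : MeasurableSet B) :
    (#(signedArrangements (univ : Finset (Fin n))) : ℝ≥0∞) * Measure.pi (fun _ : Fin n => μ)
        ({v | ∑ j, (v j).1 ∈ B} ∩ {v | P (List.ofFn fun j => (v j).2)}) =
      ∫⁻ v in {v : Fin n → ℝ × ℝ | ∑ j, (v j).1 ∈ B},
        (arrangementCount P (fun i => (v i).2) univ : ℝ≥0∞) ∂Measure.pi (fun _ : Fin n => μ) := by
  classical
  set A : Set (Fin n → ℝ × ℝ) := {v | ∑ j, (v j).1 ∈ B}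
  set E : List (Fin n) × Finset (Fin n) → Set (Fin n → ℝ × ℝ) :=
    fun w => {v | P (signedValues (fun i => (v i).2) w)}
  have htransport : ∀ w ∈ signedArrangements univ, MeasurableSet (E w) ∧
      Measure.pi (fun _ => μ) (A ∩ E w) =
        Measure.pi (fun _ => μ) (A ∩ {v | P (List.ofFn fun j => (v j).2)}) := by
    rintro ⟨l, T⟩ hw
    obtain ⟨σ, rfl⟩ := exists_perm_ofFn_eq hw
    have hG := measurePreserving_signedPerm hμ σ T
    have hGA : signedPerm σ T ⁻¹' A = A := by ext v; simp [A, sum_fst_signedPerm]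
    have hGE : signedPerm σ T ⁻¹' {v | P (List.ofFn fun j => (v j).2)} = E (List.ofFn σ, T) := by
      ext v; simp [E, ofFn_snd_signedPerm]
    refine ⟨hGE ▸ hG.measurable hP, ?_⟩
    have := hG.measure_preimage ((measurableSet_sum_fst_mem hB).inter hP).nullMeasurableSet
    rwa [Set.preimage_inter, hGA, hGE] at this
  rw [← nsmul_eq_mul, ← sum_const, ← sum_congr rfl fun w hw => (htransport w hw).2]
  exact sum_measure_inter_eq_setLIntegral _ _ (fun w hw => (htransport w hw).1) A

theorem pi_measure_inter_posPrefixSums_le {B : Set ℝ} (hB : MeasurableSet B) :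
    Measure.pi (fun _ : Fin n => μ)
        ({v | ∑ j, (v j).1 ∈ B} ∩ {v | PosPrefixSums (List.ofFn fun j => (v j).2)}) ≤
      Measure.pi (fun _ : Fin n => μ) {v | ∑ j, (v j).1 ∈ B} *
        Measure.pi (fun _ : Fin n => μ) {v | NonnegPrefixSums (List.ofFn fun j => (v j).2)} := by
  set ν := Measure.pi fun _ : Fin n => μ
  set A := {v : Fin n → ℝ × ℝ | ∑ j, (v j).1 ∈ B}
  set E := {v : Fin n → ℝ × ℝ | PosPrefixSums (List.ofFn fun j => (v j).2)}
  set F := {v : Fin n → ℝ × ℝ | NonnegPrefixSums (List.ofFn fun j => (v j).2)}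
  set W := signedArrangements (univ : Finset (Fin n))
  obtain ⟨C, hC⟩ := exists_arrangementCount_le_le (univ : Finset (Fin n))
  have hupper : (#W : ℝ≥0∞) * ν (A ∩ E) ≤ C * ν A := by
    rw [card_mul_pi_measure_eq_setLIntegral hμ measurableSet_posPrefixSums hB,
      ← setLIntegral_const]
    exact lintegral_mono fun v => Nat.cast_le.2 (hC _).1
  have hlower : (C : ℝ≥0∞) ≤ #W * ν F := by
    have := card_mul_pi_measure_eq_setLIntegral (n := n) hμ measurableSet_nonnegPrefixSums
      MeasurableSet.univ
    simp only [Set.mem_univ, Set.ofPred_true, Set.univ_inter, Measure.restrict_univ] at this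
    rw [this, ← mul_one (C : ℝ≥0∞), ← measure_univ (μ := ν), ← lintegral_const]
    exact lintegral_mono fun v => Nat.cast_le.2 (hC _).2
  have hW : (#W : ℝ≥0∞) ≠ 0 := Nat.cast_ne_zero.2 (signedArrangements_nonempty _).card_pos.ne'
  rw [← ENNReal.mul_le_mul_iff_right hW (ENNReal.natCast_ne_top _)]
  calc (#W : ℝ≥0∞) * ν (A ∩ E) ≤ C * ν A := hupper
    _ ≤ #W * ν F * ν A := by gcongr
    _ = #W * (ν A * ν F) := by ring

end SignedPermutations

section Walk

variable {Ω : Type*} (X : ℕ → Ω → ℝ × ℝ) (ω : Ω)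

theorem walk2_fst (n : ℕ) : (walk2 X n ω).1 = ∑ j : Fin n, (X j ω).1 := by
  simp [walk2, Prod.fst_sum, Fin.sum_univ_eq_sum_range (fun j => (X j ω).1)]

theorem walk2_snd_eq_sum_take {n k : ℕ} (hk : k ≤ n) :
    (walk2 X k ω).2 = ((List.ofFn fun j : Fin n => (X j ω).2).take k).sum := by
  rw [sum_take_ofFn_eq_sum_range (fun j => (X j ω).2) hk]
  simp [walk2, Prod.snd_sum]

theorem forall_walk2_snd_pos_iff (n : ℕ) : (∀ i ∈ Icc 1 n, 0 < (walk2 X i ω).2) ↔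
    PosPrefixSums (List.ofFn fun j : Fin n => (X j ω).2) := by
  rw [posPrefixSums_iff_take, List.length_ofFn]
  exact forall₂_congr fun k hk => by rw [walk2_snd_eq_sum_take X ω (mem_Icc.1 hk).2]

theorem forall_walk2_snd_nonneg_iff (n : ℕ) : (∀ i ∈ Icc 1 n, 0 ≤ (walk2 X i ω).2) ↔
    NonnegPrefixSums (List.ofFn fun j : Fin n => (X j ω).2) := by
  rw [nonnegPrefixSums_iff_take, List.length_ofFn]
  exact forall₂_congr fun k hk => by rw [walk2_snd_eq_sum_take X ω (mem_Icc.1 hk).2]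

end Walk

theorem IsIIDSeq2.map_eq_pi {Ω : Type*} [MeasureSpace Ω] [IsProbabilityMeasure (ℙ : Measure Ω)]
    {X : ℕ → Ω → ℝ × ℝ} (hX : IsIIDSeq2 X) (n : ℕ) :
    (ℙ : Measure Ω).map (fun ω (j : Fin n) => X j ω) =
      Measure.pi fun _ => (ℙ : Measure Ω).map (X 0) := by
  obtain ⟨hmeas, hind, hid⟩ := hX
  rw [(iIndepFun_iff_map_fun_eq_pi_map (f := fun j : Fin n => X j)
    fun j => (hmeas j).aemeasurable).1 (hind.precomp Fin.val_injective)]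
  exact congrArg Measure.pi (funext fun j => (hid j).map_eq)

/-- **Proposition 3, inequality (indep2).** For a bivariate random walk whose increment
`(X¹, X²)` is distributed as `(X¹, -X²)`,
`P(Sₙ¹ ∈ B, min_{1≤i≤n} Sᵢ² > 0) ≤ P(Sₙ¹ ∈ B) P(min_{1≤i≤n} Sᵢ² ≥ 0)`. -/
theorem bivariate_halfplane_upper_bound
    {Ω : Type*} [MeasureSpace Ω] [IsProbabilityMeasure (ℙ : Measure Ω)]
    (X : ℕ → Ω → ℝ × ℝ) (hX : IsIIDSeq2 X)
    (hsymm : IdentDistrib (X 0) (fun ω => ((X 0 ω).1, -(X 0 ω).2)) ℙ ℙ) :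
    ∀ n : ℕ, 1 ≤ n → ∀ B : Set ℝ, MeasurableSet B →
      ℙ {ω | (walk2 X n ω).1 ∈ B ∧ ∀ i ∈ Finset.Icc 1 n, 0 < (walk2 X i ω).2} ≤
        ℙ {ω | (walk2 X n ω).1 ∈ B} *
          ℙ {ω | ∀ i ∈ Finset.Icc 1 n, 0 ≤ (walk2 X i ω).2} := by
  intro n _ B hB
  set μ := (ℙ : Measure Ω).map (X 0)
  have : IsProbabilityMeasure μ := Measure.isProbabilityMeasure_map (hX.1 0).aemeasurable
  have hμ : MeasurePreserving (fun p : ℝ × ℝ => (p.1, -p.2)) μ μ :=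
    ⟨by fun_prop, by rw [Measure.map_map (by fun_prop) (hX.1 0)]; exact hsymm.map_eq.symm⟩
  let Y : Ω → Fin n → ℝ × ℝ := fun ω j => X j ω
  have hY : Measurable Y := measurable_pi_lambda _ fun j => hX.1 j
  have hprob : ∀ S, MeasurableSet S → ℙ (Y ⁻¹' S) = Measure.pi (fun _ => μ) S := fun S hS => by
    rw [← hX.map_eq_pi n, Measure.map_apply hY hS]
  have hA := measurableSet_sum_fst_mem (n := n) hB
  have := pi_measure_inter_posPrefixSums_le (n := n) hμ hB
  rw [← hprob _ (hA.inter measurableSet_posPrefixSums), ← hprob _ hA,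
    ← hprob _ measurableSet_nonnegPrefixSums] at this
  convert this using 3 <;> ext ω <;>
    simp only [Set.mem_ofPred_eq, Set.mem_preimage, Set.mem_inter_iff, Y, walk2_fst,
      forall_walk2_snd_pos_iff, forall_walk2_snd_nonneg_iff]
end

section
/- Let S_n be a non-degenerate centered random walk (E S_1 = 0). Then for every N ≥ 1: P(min_{1≤k≤N} A_k > 0) = P(min_{1≤k≤η(N)} A_{Θ_k} > 0, A_1 > 0, A_N > 0), where the minimum over an empty index set (η(N) = 0) is interpreted as +∞ (so that condition holds vacuously). -/
open MeasureTheory ProbabilityTheory Filter Real Topology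
open scoped ENNReal

/-- The random walk `S n = X 1 + ⋯ + X n` built from the increments `X 0, X 1, …`. -/
noncomputable def walk {Ω : Type*} (X : ℕ → Ω → ℝ) (n : ℕ) (ω : Ω) : ℝ :=
  ∑ i ∈ Finset.range n, X i ω

/-- The integrated random walk `A n = S 1 + ⋯ + S n`. -/
noncomputable def area {Ω : Type*} (X : ℕ → Ω → ℝ) (n : ℕ) (ω : Ω) : ℝ :=
  ∑ k ∈ Finset.range n, walk X (k + 1) ω

/-- `X` is an i.i.d. sequence of (measurable) random variables. -/
def IsIIDSeq {Ω : Type*} [MeasureSpace Ω] (X : ℕ → Ω → ℝ) : Prop :=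
  (∀ i, Measurable (X i)) ∧ iIndepFun X ℙ ∧
    ∀ i, IdentDistrib (X i) (X 0) ℙ ℙ

/-- The walk is right-exponential: `P(S₁ > x | S₁ > 0) = e^{-a x}` for some `a > 0`
and all `x > 0`. -/
def IsRightExponential {Ω : Type*} [MeasureSpace Ω] (X : ℕ → Ω → ℝ) : Prop :=
  ∃ a : ℝ, 0 < a ∧ ∀ x : ℝ, 0 < x →
    (ℙ[|{ω | 0 < X 0 ω}]) {ω | x < X 0 ω} = ENNReal.ofReal (Real.exp (-(a * x)))

/-- The walk is right-continuous (skip free): it is integer-valued and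
`P(S₁ = 1 | S₁ > 0) = 1`. -/
def IsRightContinuous {Ω : Type*} [MeasureSpace Ω] (X : ℕ → Ω → ℝ) : Prop :=
  (∀ᵐ ω ∂(ℙ : Measure Ω), ∃ k : ℤ, X 0 ω = k) ∧
    (ℙ[|{ω | 0 < X 0 ω}]) {ω | X 0 ω = 1} = 1

/-- The crossing times of the zero level from below: `Θ_0 = min {n ≥ 0 : S_{n+1} > 0}` and
`Θ_{k+1} = min {n > Θ_k : S_n ≤ 0, S_{n+1} > 0}`. -/
noncomputable def crossTime {Ω : Type*} (X : ℕ → Ω → ℝ) : ℕ → Ω → ℕ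
  | 0 => fun ω => sInf {n | 0 < walk X (n + 1) ω}
  | k + 1 => fun ω =>
      sInf {n | crossTime X k ω < n ∧ walk X n ω ≤ 0 ∧ 0 < walk X (n + 1) ω}

/-- The length `θ_k = Θ_k - Θ_{k-1}` of the `k`-th cycle. -/
noncomputable def cycleLen {Ω : Type*} (X : ℕ → Ω → ℝ) (k : ℕ) (ω : Ω) : ℕ :=
  crossTime X k ω - crossTime X (k - 1) ω

/-- The area `ψ_k = A_{Θ_k} - A_{Θ_{k-1}}` of the `k`-th cycle. -/
noncomputable def cycleArea {Ω : Type*} (X : ℕ → Ω → ℝ) (k : ℕ) (ω : Ω) : ℝ :=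
  area X (crossTime X k ω) ω - area X (crossTime X (k - 1) ω) ω

/-- The number `η(N) = max {n ≥ 0 : Θ_n ≤ N}` of complete cycles before time `N`. -/
noncomputable def eta {Ω : Type*} (X : ℕ → Ω → ℝ) (N : ℕ) (ω : Ω) : ℕ :=
  sSup {n | crossTime X n ω ≤ N}

/-!
On the event that the walk crosses zero upwards infinitely often, the two events coincide
pathwise: between consecutive crossing times `Θ_k < Θ_{k+1}` the walk is first positive and then
nonpositive, so the area is unimodal on each cycle and `A_n ≥ min A_{Θ_k + 1} A_{min Θ_{k+1} N}`
for `Θ_k < n ≤ Θ_{k+1}`, where `A_{Θ_k + 1} > A_{Θ_k}` for `k ≥ 1` and `A_{Θ_0 + 1} = A_1`.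
A centered non-degenerate walk crosses zero upwards infinitely often almost surely, because it is
a.s. unbounded above and below: by Kolmogorov's 0-1 law the alternative is that it is a.s. bounded
above, and then its maximum would be a stationary solution of Lindley's equation, which does not
exist for centered steps.
-/

section RealSequence

variable {s : ℕ → ℝ}

theorem bddAbove_range_iff_bddAbove_range_sub (n : ℕ) :
    BddAbove (Set.range s) ↔ BddAbove (Set.range fun k => s (n + k) - s n) := by
  constructor
  · rintro ⟨b, hb⟩
    exact ⟨b - s n, by rintro _ ⟨k, rfl⟩; linarith [hb ⟨n + k, rfl⟩]⟩
  · rintro ⟨b, hb⟩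
    obtain ⟨b', hb'⟩ := ((Set.finite_lt_nat n).image s).bddAbove
    refine ⟨max b' (b + s n), ?_⟩
    rintro _ ⟨m, rfl⟩
    rcases lt_or_ge m n with hm | hm
    · exact le_max_of_le_left (hb' ⟨m, hm, rfl⟩)
    · obtain ⟨k, rfl⟩ := Nat.exists_eq_add_of_le hm
      exact le_max_of_le_right (by linarith [hb ⟨k, rfl⟩])

theorem exists_ge_lt_of_not_bddAbove (hs : ¬BddAbove (Set.range s)) (m : ℕ) (c : ℝ) :
    ∃ n, m ≤ n ∧ c < s n := by
  by_contra! h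
  refine hs ((bddAbove_range_iff_bddAbove_range_sub m).2 ⟨c - s m, ?_⟩)
  rintro _ ⟨k, rfl⟩
  linarith [h (m + k) (Nat.le_add_right m k)]

theorem exists_upcrossing_of_nonpos_of_pos {a b : ℕ} (hab : a ≤ b) (ha : s a ≤ 0) (hb : 0 < s b) :
    ∃ n, a ≤ n ∧ n < b ∧ s n ≤ 0 ∧ 0 < s (n + 1) := by
  induction b, hab using Nat.le_induction with
  | base => exact absurd hb (not_lt.2 ha)
  | succ b hab ih =>
    rcases le_or_gt (s b) 0 with hsb | hsb
    · exact ⟨b, hab, b.lt_succ_self, hsb, hb⟩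
    · obtain ⟨n, han, hnb, hn⟩ := ih hsb
      exact ⟨n, han, hnb.trans b.lt_succ_self, hn⟩

theorem frequently_upcrossing_of_not_bddAbove (hup : ¬BddAbove (Set.range s))
    (hdown : ¬BddAbove (Set.range fun n => -s n)) :
    ∃ᶠ n in atTop, s n ≤ 0 ∧ 0 < s (n + 1) := by
  refine frequently_atTop.2 fun m => ?_
  obtain ⟨n₁, hmn₁, hn₁⟩ := exists_ge_lt_of_not_bddAbove hdown m 0
  obtain ⟨n₂, hn₁n₂, hn₂⟩ := exists_ge_lt_of_not_bddAbove hup n₁ 0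
  obtain ⟨n, hn₁n, -, hn⟩ := exists_upcrossing_of_nonpos_of_pos hn₁n₂ (by linarith) hn₂
  exact ⟨n, hmn₁.trans hn₁n, hn⟩

end RealSequence

namespace StrictMono

variable {f : ℕ → ℕ} (hf : StrictMono f)
include hf

theorem exists_apply_lt_le_apply_succ {n : ℕ} (hn : f 0 < n) : ∃ k, f k < n ∧ n ≤ f (k + 1) := by
  classical
  have hex : ∃ j, n ≤ f j := ⟨n, hf.id_le n⟩
  obtain ⟨k, hk⟩ : ∃ k, Nat.find hex = k + 1 :=
    Nat.exists_eq_add_one.2 ((Nat.find_pos hex).2 hn.not_ge)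
  exact ⟨k, not_le.1 (Nat.find_min hex (by omega)), hk ▸ Nat.find_spec hex⟩

theorem le_sSup_setOf_apply_le_iff {N k : ℕ} (h0 : f 0 ≤ N) :
    k ≤ sSup {n | f n ≤ N} ↔ f k ≤ N := by
  have hbdd : BddAbove {n | f n ≤ N} := ⟨N, fun n hn => (hf.id_le n).trans hn⟩
  exact ⟨fun hk => (hf.monotone hk).trans (Nat.sSup_mem ⟨0, h0⟩ hbdd), fun hk => le_csSup hbdd hk⟩

end StrictMono

/-- Takes the junk value `0` when the partial sums are unbounded above. -/
noncomputable def supPartialSum (x : ℕ → ℝ) : ℝ :=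
  ⨆ k, ∑ i ∈ Finset.range k, x i

theorem supPartialSum_nonneg (x : ℕ → ℝ) : 0 ≤ supPartialSum x := by
  unfold supPartialSum
  by_cases h : BddAbove (Set.range fun k => ∑ i ∈ Finset.range k, x i)
  · simpa using le_ciSup h 0
  · rw [Real.iSup_of_not_bddAbove h]

theorem measurable_supPartialSum : Measurable supPartialSum :=
  Measurable.iSup fun _ => Finset.measurable_sum _ fun i _ => measurable_pi_apply i

theorem supPartialSum_eq_max {x : ℕ → ℝ}
    (h : BddAbove (Set.range fun k => ∑ i ∈ Finset.range k, x i)) :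
    supPartialSum x = max 0 (x 0 + supPartialSum fun i => x (i + 1)) := by
  have hsucc : ∀ k, ∑ i ∈ Finset.range (k + 1), x i = x 0 + ∑ i ∈ Finset.range k, x (i + 1) :=
    fun k => by rw [Finset.sum_range_succ', add_comm]
  have htail : BddAbove (Set.range fun k => ∑ i ∈ Finset.range k, x (i + 1)) := by
    obtain ⟨b, hb⟩ := h
    exact ⟨b - x 0, by rintro _ ⟨k, rfl⟩; linarith [hb ⟨k + 1, rfl⟩, hsucc k]⟩
  unfold supPartialSum
  apply le_antisymm
  · refine ciSup_le fun k => ?_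
    cases k with
    | zero => simp
    | succ k => rw [hsucc]; exact le_max_of_le_right (by linarith [le_ciSup htail k])
  · refine max_le (by simpa using le_ciSup h 0) ?_
    rw [← le_sub_iff_add_le']
    exact ciSup_le fun k => le_sub_iff_add_le'.2 ((hsucc k).symm.trans_le (le_ciSup h (k + 1)))

section Cycles

variable {Ω : Type*} {X : ℕ → Ω → ℝ} {ω : Ω}

theorem area_one : area X 1 ω = walk X 1 ω := by simp [area]

theorem area_succ (n : ℕ) : area X (n + 1) ω = area X n ω + walk X (n + 1) ω := by
  simp [area, Finset.sum_range_succ]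

theorem area_le_area_of_walk_nonneg {m n : ℕ} (hmn : m ≤ n)
    (h : ∀ j, m < j → j ≤ n → 0 ≤ walk X j ω) : area X m ω ≤ area X n ω := by
  induction n, hmn using Nat.le_induction with
  | base => exact le_rfl
  | succ n hmn ih =>
    rw [area_succ]
    linarith [ih fun j hj hjn => h j hj (by omega), h (n + 1) (by omega) le_rfl]

theorem area_le_area_of_walk_nonpos {m n : ℕ} (hmn : m ≤ n)
    (h : ∀ j, m < j → j ≤ n → walk X j ω ≤ 0) : area X n ω ≤ area X m ω := by
  induction n, hmn using Nat.le_induction with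
  | base => exact le_rfl
  | succ n hmn ih =>
    rw [area_succ]
    linarith [ih fun j hj hjn => h j hj (by omega), h (n + 1) (by omega) le_rfl]

section NoUpcrossing

variable {a b : ℕ} (hno : ∀ j, a < j → j < b → ¬(walk X j ω ≤ 0 ∧ 0 < walk X (j + 1) ω))
include hno

theorem walk_nonpos_of_no_upcrossing {m n : ℕ} (ham : a < m) (hmn : m ≤ n) (hnb : n ≤ b)
    (hm : walk X m ω ≤ 0) : walk X n ω ≤ 0 := by
  induction n, hmn using Nat.le_induction with
  | base => exact hm
  | succ n hmn ih =>
    by_contra! h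
    exact hno n (by omega) (by omega) ⟨ih (by omega), h⟩

theorem min_le_area_of_no_upcrossing {n : ℕ} (han : a < n) (hnb : n ≤ b) :
    min (area X (a + 1) ω) (area X b ω) ≤ area X n ω := by
  by_cases hpos : ∀ j, a < j → j ≤ n → 0 < walk X j ω
  · exact (min_le_left _ _).trans
      (area_le_area_of_walk_nonneg han fun j hj hjn => (hpos j (by omega) hjn).le)
  · push Not at hpos
    obtain ⟨m, ham, hmn, hm⟩ := hpos
    exact (min_le_right _ _).trans (area_le_area_of_walk_nonpos hnb fun j hj hjb =>
      walk_nonpos_of_no_upcrossing hno ham (by omega) hjb hm)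

end NoUpcrossing

theorem crossTime_zero_eq_zero (h : 0 < walk X 1 ω) : crossTime X 0 ω = 0 :=
  Nat.sInf_eq_zero.2 (Or.inl h)

theorem not_upcrossing_of_crossTime_lt_of_lt_crossTime_succ {k n : ℕ}
    (h₁ : crossTime X k ω < n) (h₂ : n < crossTime X (k + 1) ω) :
    ¬(walk X n ω ≤ 0 ∧ 0 < walk X (n + 1) ω) :=
  fun hn => Nat.notMem_of_lt_sInf h₂ ⟨h₁, hn⟩

section Oscillating

variable (hosc : ∃ᶠ n in atTop, walk X n ω ≤ 0 ∧ 0 < walk X (n + 1) ω)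
include hosc

theorem crossTime_succ_spec (k : ℕ) :
    crossTime X k ω < crossTime X (k + 1) ω ∧ walk X (crossTime X (k + 1) ω) ω ≤ 0 ∧
      0 < walk X (crossTime X (k + 1) ω + 1) ω := by
  obtain ⟨n, hn, hup⟩ := frequently_atTop.1 hosc (crossTime X k ω + 1)
  have hne : {m | crossTime X k ω < m ∧ walk X m ω ≤ 0 ∧ 0 < walk X (m + 1) ω}.Nonempty :=
    ⟨n, hn, hup⟩
  exact Nat.sInf_mem hne

theorem crossTime_strictMono : StrictMono fun k => crossTime X k ω :=
  strictMono_nat_of_lt_succ fun k => (crossTime_succ_spec hosc k).1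

theorem forall_Icc_area_pos_iff {N : ℕ} (hN : 1 ≤ N) :
    (∀ k ∈ Finset.Icc 1 N, 0 < area X k ω) ↔
      ((∀ k, 1 ≤ k → k ≤ eta X N ω → 0 < area X (crossTime X k ω) ω) ∧
        0 < area X 1 ω ∧ 0 < area X N ω) := by
  have hmono := crossTime_strictMono hosc
  have hη (h₀ : crossTime X 0 ω = 0) {k : ℕ} : k ≤ eta X N ω ↔ crossTime X k ω ≤ N :=
    hmono.le_sSup_setOf_apply_le_iff (by omega)
  constructor
  · intro h
    have hA₁ := h 1 (by simp [hN])
    have h₀ := crossTime_zero_eq_zero (by rwa [area_one] at hA₁)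
    exact ⟨fun k hk hkη => h _ (Finset.mem_Icc.2 ⟨hk.trans (hmono.id_le k), (hη h₀).1 hkη⟩),
      hA₁, h N (by simp [hN])⟩
  · rintro ⟨hcyc, hA₁, hA_N⟩ n hn
    rw [Finset.mem_Icc] at hn
    have h₀ := crossTime_zero_eq_zero (by rwa [area_one] at hA₁)
    obtain ⟨k, hkn, hnk⟩ := hmono.exists_apply_lt_le_apply_succ (n := n) (by simp only [h₀]; omega)
    have hstart : 0 < area X (crossTime X k ω + 1) ω := by
      cases k with
      | zero => rwa [h₀]
      | succ k =>
        rw [area_succ]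
        linarith [hcyc (k + 1) (by omega) ((hη h₀).2 (by omega)), (crossTime_succ_spec hosc k).2.2]
    have hend : 0 < area X (min (crossTime X (k + 1) ω) N) ω := by
      rcases le_total (crossTime X (k + 1) ω) N with h | h
      · rw [min_eq_left h]; exact hcyc _ (by omega) ((hη h₀).2 h)
      · rwa [min_eq_right h]
    refine (lt_min hstart hend).trans_le (min_le_area_of_no_upcrossing ?_ hkn (le_min hnk hn.2))
    exact fun j hj hjb => not_upcrossing_of_crossTime_lt_of_lt_crossTime_succ hj
      (hjb.trans_le (min_le_left _ _))

end Oscillating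

end Cycles

section Lindley

variable {Ω : Type*} {mΩ : MeasurableSpace Ω} {μ : Measure Ω} {ξ W : Ω → ℝ}

theorem measure_neg_pos_of_integral_eq_zero (hξ : Integrable ξ μ) (hmean : ∫ ω, ξ ω ∂μ = 0)
    (hne : μ {ω | ξ ω ≠ 0} ≠ 0) : 0 < μ {ω | ξ ω < 0} := by
  refine pos_iff_ne_zero.2 fun hneg => hne ?_
  have hnn : 0 ≤ᵐ[μ] ξ := ae_iff.2 (by simpa only [Pi.zero_apply, not_le] using hneg)
  exact ae_iff.1 ((integral_eq_zero_iff_of_nonneg_ae hnn hξ).1 hmean)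

theorem abs_min_max_zero_add_sub_min_le {x w t : ℝ} (hw : 0 ≤ w) :
    |min (max 0 (x + w)) t - min w t| ≤ |x| := by
  grind

variable [IsProbabilityMeasure μ]

theorem ae_nonneg_add_of_identDistrib_max_zero_add (hξ : Integrable ξ μ)
    (hmean : ∫ ω, ξ ω ∂μ = 0) (hW : ∀ ω, 0 ≤ W ω)
    (hid : IdentDistrib (fun ω => max 0 (ξ ω + W ω)) W μ μ) :
    ∀ᵐ ω ∂μ, 0 ≤ ξ ω + W ω := by
  set R : Ω → ℝ := fun ω => max 0 (ξ ω + W ω) with hR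
  have hRm : AEStronglyMeasurable R μ := hid.aemeasurable_fst.aestronglyMeasurable
  have hWm : AEStronglyMeasurable W μ := hid.aemeasurable_snd.aestronglyMeasurable
  have hR₀ (ω : Ω) : 0 ≤ R ω := le_max_left _ _
  have hmin_int {V : Ω → ℝ} (hV : AEStronglyMeasurable V μ) (hV₀ : ∀ ω, 0 ≤ V ω) (j : ℕ) :
      Integrable (fun ω => min (V ω) j) μ :=
    .of_bound (hV.inf aestronglyMeasurable_const) j (ae_of_all _ fun ω => by
      rw [Real.norm_eq_abs, abs_of_nonneg (le_min (hV₀ ω) j.cast_nonneg)]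
      exact min_le_right _ _)
  have htrunc (j : ℕ) : ∫ ω, (min (R ω) j - min (W ω) j) ∂μ = 0 := by
    rw [integral_sub (hmin_int hRm hR₀ j) (hmin_int hWm hW j), sub_eq_zero]
    exact (hid.comp (measurable_id.min measurable_const)).integral_eq
  have hlim : Tendsto (fun j : ℕ => ∫ ω, (min (R ω) j - min (W ω) j) ∂μ) atTop
      (𝓝 (∫ ω, (R ω - W ω) ∂μ)) := by
    refine tendsto_integral_of_dominated_convergence (fun ω => |ξ ω|)
      (fun j => (hmin_int hRm hR₀ j).1.sub (hmin_int hWm hW j).1) hξ.abs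
      (fun j => ae_of_all _ fun ω => abs_min_max_zero_add_sub_min_le (hW ω))
      (ae_of_all _ fun ω => tendsto_const_nhds.congr' ?_)
    filter_upwards [eventually_ge_atTop ⌈max (R ω) (W ω)⌉₊] with j hj
    have hj' := (Nat.le_ceil _).trans (Nat.cast_le.2 hj : (⌈max (R ω) (W ω)⌉₊ : ℝ) ≤ j)
    rw [min_eq_left ((le_max_left _ _).trans hj'), min_eq_left ((le_max_right _ _).trans hj')]
  have hRW : ∫ ω, ξ ω ∂μ = ∫ ω, (R ω - W ω) ∂μ := by
    rw [hmean]
    exact tendsto_nhds_unique (by simp only [htrunc]; exact tendsto_const_nhds) hlim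
  have hRW_int : Integrable (fun ω => R ω - W ω) μ :=
    hξ.abs.mono' (hRm.sub hWm) (ae_of_all _ fun ω => by
      have := hW ω
      simp only [hR, Real.norm_eq_abs]
      grind)
  have hae := (integral_eq_iff_of_ae_le hξ hRW_int
    (ae_of_all _ fun ω => by simp only [hR]; linarith [le_max_right 0 (ξ ω + W ω)])).1 hRW
  filter_upwards [hae] with ω h
  simp only [hR] at h
  linarith [le_max_left 0 (ξ ω + W ω)]

/-- Lindley's equation: a centered random walk reflected at `0` has no stationary law. -/
theorem not_identDistrib_max_zero_add (hξ : Integrable ξ μ) (hmean : ∫ ω, ξ ω ∂μ = 0)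
    (hne : μ {ω | ξ ω ≠ 0} ≠ 0) (hW : ∀ ω, 0 ≤ W ω) (hind : IndepFun ξ W μ) :
    ¬IdentDistrib (fun ω => max 0 (ξ ω + W ω)) W μ μ := by
  intro hid
  have hsum : IdentDistrib (fun ω => ξ ω + W ω) W μ μ := by
    refine (IdentDistrib.of_ae_eq hid.aemeasurable_fst ?_).symm.trans hid
    filter_upwards [ae_nonneg_add_of_identDistrib_max_zero_add hξ hmean hW hid] with ω h
    exact max_eq_right h
  obtain ⟨s, hs, hξs⟩ : ∃ s : ℝ, 0 < s ∧ 0 < μ {ω | ξ ω ≤ -s} := by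
    have hsub : {ω | ξ ω < 0} ⊆ ⋃ n : ℕ, {ω | ξ ω ≤ -(1 / ((n : ℝ) + 1))} := fun ω hω => by
      obtain ⟨n, hn⟩ := exists_nat_one_div_lt (neg_pos.2 (hω : ξ ω < 0) : (0 : ℝ) < -ξ ω)
      exact Set.mem_iUnion.2 ⟨n, by simp only [Set.mem_ofPred_eq]; linarith⟩
    obtain ⟨n, hn⟩ := exists_measure_pos_of_not_measure_iUnion_null fun h =>
      (measure_neg_pos_of_integral_eq_zero hξ hmean hne).ne' (measure_mono_null hsub h)
    exact ⟨_, Nat.one_div_pos_of_nat, hn⟩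
  have hstep (c : ℝ) (hc : 0 < μ {ω | W ω ≤ c}) : 0 < μ {ω | W ω ≤ c - s} :=
    calc 0 < μ {ω | ξ ω ≤ -s} * μ {ω | W ω ≤ c} := ENNReal.mul_pos hξs.ne' hc.ne'
      _ = μ ({ω | ξ ω ≤ -s} ∩ {ω | W ω ≤ c}) :=
        (hind.measure_inter_preimage_eq_mul _ _ measurableSet_Iic measurableSet_Iic).symm
      _ ≤ μ {ω | ξ ω + W ω ≤ c - s} := measure_mono fun ω ⟨h₁, h₂⟩ => by
        simp only [Set.mem_ofPred_eq] at h₁ h₂ ⊢; linarith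
      _ = μ {ω | W ω ≤ c - s} := hsum.measure_mem_eq measurableSet_Iic
  obtain ⟨n, hn⟩ : ∃ n : ℕ, 0 < μ {ω | W ω ≤ n} := by
    have hcover : ⋃ n : ℕ, {ω | W ω ≤ n} = Set.univ :=
      Set.eq_univ_of_forall fun ω => Set.mem_iUnion.2 (exists_nat_ge (W ω))
    exact exists_measure_pos_of_not_measure_iUnion_null (by simp [hcover])
  have hiter (k : ℕ) : 0 < μ {ω | W ω ≤ n - k * s} := by
    induction k with
    | zero => simpa using hn
    | succ k ih => simpa [add_mul, ← sub_sub] using hstep _ ih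
  obtain ⟨k, hk⟩ := exists_nat_gt (n / s)
  have hempty : {ω | W ω ≤ n - k * s} = ∅ := Set.eq_empty_of_forall_notMem fun ω hω => by
    have := (div_lt_iff₀ hs).1 hk
    simp only [Set.mem_ofPred_eq] at hω
    linarith [hW ω]
  simpa [hempty] using hiter k

end Lindley

section RandomWalk

variable {Ω : Type*} {X : ℕ → Ω → ℝ}

theorem walk_neg (n : ℕ) (ω : Ω) : walk (fun i ω => -X i ω) n ω = -walk X n ω := by
  simp [walk]

theorem measure_not_bddAbove_walk_eq_zero_or_one {mΩ : MeasurableSpace Ω} {μ : Measure Ω}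
    (hmeas : ∀ i, Measurable (X i)) (hind : iIndepFun X μ) :
    μ {ω | ¬BddAbove (Set.range fun n => walk X n ω)} = 0 ∨
      μ {ω | ¬BddAbove (Set.range fun n => walk X n ω)} = 1 := by
  refine measure_zero_or_one_of_measurableSet_limsup_atTop (fun n => (hmeas n).comap_le)
    hind.iIndep ?_
  rw [limsup_eq_iInf_iSup_of_nat, MeasurableSpace.measurableSet_iInf]
  intro n
  have htail : {ω | ¬BddAbove (Set.range fun k => walk X k ω)} =
      {ω | ¬BddAbove (Set.range fun k => ∑ i ∈ Finset.range k, X (n + i) ω)} := by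
    ext ω
    simp only [Set.mem_ofPred_eq]
    rw [bddAbove_range_iff_bddAbove_range_sub n]
    simp only [walk, Finset.sum_range_add, add_sub_cancel_left]
  rw [htail]
  refine (measurableSet_bddAbove_range fun k => Finset.measurable_sum _ fun i _ => ?_).compl
  exact Measurable.of_comap_le (le_iSup₂ (f := fun i (_ : i ≥ n) =>
    MeasurableSpace.comap (X i) inferInstance) (n + i) (Nat.le_add_right n i))

variable [MeasureSpace Ω]

theorem IsIIDSeq.neg (hX : IsIIDSeq X) : IsIIDSeq fun i ω => -X i ω :=
  ⟨fun i => (hX.1 i).neg, hX.2.1.comp (fun _ x => -x) fun _ => measurable_neg,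
    fun i => (hX.2.2 i).comp measurable_neg⟩

theorem IsIIDSeq.identDistrib_shift (hX : IsIIDSeq X) :
    IdentDistrib (fun ω i => X i ω) (fun ω i => X (i + 1) ω) ℙ ℙ :=
  IdentDistrib.pi (fun i => (hX.2.2 i).trans (hX.2.2 (i + 1)).symm) hX.2.1
    (hX.2.1.precomp (add_left_injective 1))

theorem IsIIDSeq.indepFun_head_tail (hX : IsIIDSeq X) :
    IndepFun (X 0) (fun ω i => X (i + 1) ω) ℙ := by
  have h := indep_iSup_of_disjoint (fun i => (hX.1 i).comap_le) hX.2.1.iIndep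
    (S := {0}) (T := Set.Ioi 0) (by simp)
  refine (IndepFun_iff_Indep _ _ _).2 (indep_of_indep_of_le_right
    (indep_of_indep_of_le_left h ?_) ?_)
  · exact le_iSup₂ (f := fun i (_ : i ∈ ({0} : Set ℕ)) =>
      MeasurableSpace.comap (X i) inferInstance) 0 rfl
  · refine Measurable.comap_le (@measurable_pi_lambda _ _ _ (_) _ _ fun i =>
      Measurable.of_comap_le ?_)
    exact le_iSup₂ (f := fun i (_ : i ∈ Set.Ioi 0) =>
      MeasurableSpace.comap (X i) inferInstance) (i + 1) i.succ_pos

variable [IsProbabilityMeasure (ℙ : Measure Ω)]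

/-- If the walk were a.s. bounded above, its maximum `M = max 0 (X 0 + M')`, with `M'` the maximum
of the walk started at time `1`, would be a stationary solution of Lindley's equation. -/
theorem IsIIDSeq.not_bddAbove_walk_ae (hX : IsIIDSeq X) (hint : Integrable (X 0) ℙ)
    (hmean : ∫ ω, X 0 ω ∂ℙ = 0) (hnd : ℙ {ω | X 0 ω ≠ 0} ≠ 0) :
    ∀ᵐ ω, ¬BddAbove (Set.range fun n => walk X n ω) := by
  rcases measure_not_bddAbove_walk_eq_zero_or_one hX.1 hX.2.1 with h | h
  · have hbdd : ∀ᵐ ω, BddAbove (Set.range fun n => walk X n ω) := ae_iff.2 (by simpa using h)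
    refine absurd ?_ (not_identDistrib_max_zero_add (ξ := X 0)
      (W := fun ω => supPartialSum fun i => X (i + 1) ω) hint hmean hnd
      (fun ω => supPartialSum_nonneg _)
      (hX.indepFun_head_tail.comp measurable_id measurable_supPartialSum))
    refine (IdentDistrib.of_ae_eq ?_ ?_).symm.trans
      (hX.identDistrib_shift.comp measurable_supPartialSum)
    · exact (measurable_supPartialSum.comp (measurable_pi_iff.2 hX.1)).aemeasurable
    · filter_upwards [hbdd] with ω h using supPartialSum_eq_max h
  · have hmeas : MeasurableSet {ω | ¬BddAbove (Set.range fun n => walk X n ω)} :=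
      (measurableSet_bddAbove_range fun n => Finset.measurable_sum _ fun i _ => hX.1 i).compl
    exact (ae_iff_measure_eq hmeas.nullMeasurableSet).2 (h.trans measure_univ.symm)

theorem IsIIDSeq.frequently_upcrossing_ae (hX : IsIIDSeq X) (hnd : ℙ {ω | X 0 ω ≠ 0} ≠ 0)
    (hint : Integrable (X 0) ℙ) (hmean : ∫ ω, X 0 ω ∂ℙ = 0) :
    ∀ᵐ ω, ∃ᶠ n in atTop, walk X n ω ≤ 0 ∧ 0 < walk X (n + 1) ω := by
  have hup := hX.not_bddAbove_walk_ae hint hmean hnd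
  have hdown := hX.neg.not_bddAbove_walk_ae hint.neg (by simp [integral_neg, hmean])
    (by simpa using hnd)
  filter_upwards [hup, hdown] with ω h₁ h₂
  exact frequently_upcrossing_of_not_bddAbove h₁ (by simpa only [walk_neg] using h₂)

end RandomWalk

/-- **Equation (reduction).** For a non-degenerate centered walk,
`P(min_{1≤k≤N} A_k > 0) = P(min_{1≤k≤η(N)} A_{Θ_k} > 0, A₁ > 0, A_N > 0)`. -/
theorem reduction_to_cycles
    {Ω : Type*} [MeasureSpace Ω] [IsProbabilityMeasure (ℙ : Measure Ω)]
    (X : ℕ → Ω → ℝ) (hX : IsIIDSeq X)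
    (hnd : ℙ {ω | X 0 ω ≠ 0} ≠ 0)
    (hint : Integrable (X 0) ℙ) (hmean : (∫ ω, X 0 ω ∂ℙ) = 0) :
    ∀ N : ℕ, 1 ≤ N →
      ℙ {ω | ∀ k ∈ Finset.Icc 1 N, 0 < area X k ω} =
        ℙ {ω | (∀ k, 1 ≤ k → k ≤ eta X N ω → 0 < area X (crossTime X k ω) ω) ∧
          0 < area X 1 ω ∧ 0 < area X N ω} := by
  intro N hN
  refine measure_congr (eventuallyEq_set.2 ?_)
  filter_upwards [hX.frequently_upcrossing_ae hnd hint hmean] with ω hosc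
  exact forall_Icc_area_pos_iff hosc hN
end
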